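/- arXiv:0709.2504 — 4 statements merged into one kernel-verified Lean document; each statement's English description precedes it below -/
import Mathlib

section
/- Let x be a unimodular complex number (|x| = 1) and let σ be a Schur function such that σ(z) - x = O((z-1)^2) as z tends nontangentially to 1. Then σ(z) = x for all z in the open unit disk. -/
/-!
By the maximum modulus principle a nonconstant Schur function `σ` maps the disk into itself.
Schwarz's lemma applied to `σ` composed with the disk automorphism sending `σ 0` to `0`
(a Schwarz–Pick estimate) gives `1 - |σ z| ≥ c (1 - |z|)` with `c > 0`, so along the radius
`|σ r - x| ≥ 1 - |σ r|` decays at most linearly, contradicting `σ r - x = O((1 - r)²)`.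
Hence `σ` is constant, and letting `r → 1` shows that the constant is `x`.
-/

noncomputable section

open Complex Filter

/-- The open unit disk in the complex plane. -/
def unitDisk : Set ℂ := {z : ℂ | ‖z‖ < 1}

/-- A Schur function: analytic on the open unit disk and bounded by one in modulus there. -/
def SchurFunction (f : ℂ → ℂ) : Prop :=
  DifferentiableOn ℂ f unitDisk ∧ ∀ z ∈ unitDisk, ‖f z‖ ≤ 1

/-- The Stolz region with parameter `K` at the boundary point `1`. -/
def stolzRegion (K : ℝ) : Set ℂ :=
  {z : ℂ | ‖z‖ < 1 ∧ ‖z - 1‖ < K * (1 - ‖z‖)}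

/-- `f(z) = O((z-1)^m)` as `z` tends nontangentially to `1`:
`(z-1)^{-m} f(z)` stays bounded as `z → 1` within each Stolz region. -/
def NTBigO (f : ℂ → ℂ) (m : ℕ) : Prop :=
  ∀ K > (1 : ℝ), f =O[nhdsWithin 1 (stolzRegion K)] fun z => (z - 1) ^ m

open Metric Set Asymptotics Topology ComplexConjugate

namespace Complex

lemma sq_norm_one_sub_conj_mul_sub_sq_norm_sub (a w : ℂ) :
    ‖1 - conj a * w‖ ^ 2 - ‖w - a‖ ^ 2 = (1 - ‖a‖ ^ 2) * (1 - ‖w‖ ^ 2) := by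
  simp only [Complex.sq_norm, normSq_apply, sub_re, sub_im, mul_re, mul_im, one_re, one_im, conj_re,
    conj_im]
  ring

lemma one_sub_norm_le_norm_one_sub_conj_mul {a w : ℂ} (hw : ‖w‖ ≤ 1) :
    1 - ‖a‖ ≤ ‖1 - conj a * w‖ :=
  calc 1 - ‖a‖ ≤ 1 - ‖a‖ * ‖w‖ := by nlinarith [norm_nonneg a]
    _ = ‖(1 : ℂ)‖ - ‖conj a * w‖ := by simp
    _ ≤ ‖1 - conj a * w‖ := norm_sub_norm_le _ _

lemma norm_sub_lt_norm_one_sub_conj_mul {a w : ℂ} (ha : ‖a‖ < 1) (hw : ‖w‖ < 1) :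
    ‖w - a‖ < ‖1 - conj a * w‖ := by
  have hid := sq_norm_one_sub_conj_mul_sub_sq_norm_sub a w
  have hpos : 0 < (1 - ‖a‖ ^ 2) * (1 - ‖w‖ ^ 2) := by
    apply mul_pos <;> nlinarith [norm_nonneg a, norm_nonneg w]
  exact lt_of_pow_lt_pow_left₀ 2 (norm_nonneg _) (by linarith)

theorem one_sub_norm_mul_le_of_mapsTo_ball {f : ℂ → ℂ} {z : ℂ}
    (hd : DifferentiableOn ℂ f (ball 0 1)) (hf : MapsTo f (ball 0 1) (ball 0 1))
    (hz : ‖z‖ < 1) :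
    (1 - ‖f 0‖) * (1 - ‖z‖) ≤ 4 * (1 - ‖f z‖) := by
  set a := f 0
  have ha : ‖a‖ < 1 := mem_ball_zero_iff.mp (hf (mem_ball_self one_pos))
  have hfz : ‖f z‖ < 1 := mem_ball_zero_iff.mp (hf (mem_ball_zero_iff.mpr hz))
  -- Schwarz's lemma for `g = (f - a) / (1 - conj a * f)`
  have hden : ∀ w ∈ ball (0 : ℂ) 1, 0 < ‖1 - conj a * f w‖ := fun w hw =>
    (norm_nonneg _).trans_lt
      (norm_sub_lt_norm_one_sub_conj_mul ha (mem_ball_zero_iff.mp (hf hw)))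
  have hgd : DifferentiableOn ℂ (fun w => (f w - a) / (1 - conj a * f w)) (ball 0 1) :=
    (hd.sub_const a).div ((differentiableOn_const 1).sub (hd.const_mul _))
      fun w hw => norm_pos_iff.mp (hden w hw)
  have hg : MapsTo (fun w => (f w - a) / (1 - conj a * f w)) (ball 0 1) (closedBall 0 1) :=
    fun w hw => by
      simpa [norm_div, div_le_one (hden w hw)] using
        (norm_sub_lt_norm_one_sub_conj_mul ha (mem_ball_zero_iff.mp (hf hw))).le
  have hschwarz := norm_le_norm_of_mapsTo_ball hgd hg (by simp [a]) hz
  rw [norm_div, div_le_iff₀ (hden z (mem_ball_zero_iff.mpr hz))] at hschwarz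
  have hid := sq_norm_one_sub_conj_mul_sub_sq_norm_sub a (f z)
  have hlow := one_sub_norm_le_norm_one_sub_conj_mul (a := a) hfz.le
  set D := ‖1 - conj a * f z‖
  have h0a : 0 < 1 - ‖a‖ := by linarith
  have hr := norm_nonneg z
  have hs := norm_nonneg (f z)
  have hsq : D ^ 2 * (1 - ‖z‖ ^ 2) ≤ (1 - ‖a‖ ^ 2) * (1 - ‖f z‖ ^ 2) := by
    nlinarith [mul_le_mul hschwarz hschwarz (norm_nonneg _) (by positivity)]
  have hscaled : (1 - ‖a‖) * ((1 - ‖a‖) * (1 - ‖z‖)) ≤ (1 - ‖a‖) * (4 * (1 - ‖f z‖)) :=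
    calc (1 - ‖a‖) * ((1 - ‖a‖) * (1 - ‖z‖))
        ≤ (1 - ‖a‖) ^ 2 * (1 - ‖z‖ ^ 2) := by
          nlinarith [mul_nonneg (sq_nonneg (1 - ‖a‖)) (mul_nonneg hr (sub_nonneg.2 hz.le))]
      _ ≤ D ^ 2 * (1 - ‖z‖ ^ 2) := by gcongr; nlinarith
      _ ≤ (1 - ‖a‖ ^ 2) * (1 - ‖f z‖ ^ 2) := hsq
      _ ≤ (1 - ‖a‖) * (4 * (1 - ‖f z‖)) := by
          have : (1 + ‖a‖) * (1 + ‖f z‖) ≤ 4 := by nlinarith [norm_nonneg a]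
          nlinarith [mul_nonneg h0a.le (sub_nonneg.2 hfz.le)]
  exact le_of_mul_le_mul_left hscaled h0a

end Complex

lemma unitDisk_eq_ball : unitDisk = ball 0 1 := by
  ext z
  simp [unitDisk]

lemma ofReal_mem_unitDisk {r : ℝ} (hr : r ∈ Ioo 0 1) : (r : ℂ) ∈ unitDisk := by
  simp [unitDisk, abs_of_pos hr.1, hr.2]

lemma tendsto_ofReal_nhdsLT_stolzRegion {K : ℝ} (hK : 1 < K) :
    Tendsto ((↑) : ℝ → ℂ) (𝓝[<] 1) (𝓝[stolzRegion K] 1) := by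
  refine tendsto_nhdsWithin_iff.mpr ⟨?_, ?_⟩
  · simpa using (continuous_ofReal.tendsto 1).mono_left nhdsWithin_le_nhds
  · filter_upwards [Ioo_mem_nhdsLT zero_lt_one] with r hr
    have hnorm : ‖(r : ℂ) - 1‖ = 1 - r := by
      rw [← ofReal_one, ← ofReal_sub, norm_real, Real.norm_of_nonpos (by linarith [hr.2])]
      ring
    refine ⟨ofReal_mem_unitDisk hr, ?_⟩
    rw [hnorm, norm_real, Real.norm_of_nonneg hr.1.le]
    nlinarith [hr.2]

lemma NTBigO.isBigO_ofReal {f : ℂ → ℂ} {m : ℕ} (h : NTBigO f m) :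
    (fun r : ℝ => f r) =O[𝓝[<] 1] fun r => (1 - r) ^ m := by
  refine ((h 2 one_lt_two).comp_tendsto (tendsto_ofReal_nhdsLT_stolzRegion one_lt_two)).trans
    (isBigO_of_le _ fun r => ?_)
  rw [Function.comp_apply, norm_pow, norm_pow, ← ofReal_one, ← ofReal_sub, norm_real, norm_sub_rev]

lemma SchurFunction.mapsTo_or_eqOn_const {σ : ℂ → ℂ} (hσ : SchurFunction σ) :
    MapsTo σ unitDisk unitDisk ∨ ∃ c, EqOn σ (fun _ => c) unitDisk := by
  by_cases h : ∃ z₀ ∈ unitDisk, 1 ≤ ‖σ z₀‖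
  · obtain ⟨z₀, hz₀, hle⟩ := h
    refine Or.inr ⟨σ z₀, ?_⟩
    rw [unitDisk_eq_ball] at hz₀ ⊢
    refine Complex.eqOn_of_isPreconnected_of_isMaxOn_norm (convex_ball 0 1).isPreconnected
      isOpen_ball (unitDisk_eq_ball ▸ hσ.1) hz₀ fun z hz => ?_
    exact (hσ.2 z (unitDisk_eq_ball ▸ hz)).trans hle
  · push Not at h
    exact Or.inl fun z hz => h z hz

lemma isBigO_one_sub_norm_ofReal {f : ℂ → ℂ} (hd : DifferentiableOn ℂ f (ball 0 1))
    (hf : MapsTo f (ball 0 1) (ball 0 1)) :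
    (fun r : ℝ => 1 - r) =O[𝓝[<] 1] fun r => 1 - ‖f r‖ := by
  have h0 : 0 < 1 - ‖f 0‖ := sub_pos.2 (mem_ball_zero_iff.mp (hf (mem_ball_self one_pos)))
  refine IsBigO.of_bound (4 / (1 - ‖f 0‖)) ?_
  filter_upwards [Ioo_mem_nhdsLT zero_lt_one] with r hr
  have hr' : ‖(r : ℂ)‖ < 1 := by simpa [unitDisk] using ofReal_mem_unitDisk hr
  have hpick := Complex.one_sub_norm_mul_le_of_mapsTo_ball hd hf hr'
  have hfr : ‖f r‖ < 1 := mem_ball_zero_iff.mp (hf (mem_ball_zero_iff.mpr hr'))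
  rw [norm_real, Real.norm_of_nonneg hr.1.le] at hpick
  rw [Real.norm_of_nonneg (by linarith [hr.2]), Real.norm_of_nonneg (by linarith),
    div_mul_eq_mul_div, le_div_iff₀ h0]
  linarith

lemma tendsto_one_sub_nhdsLT_one : Tendsto (fun r : ℝ => 1 - r) (𝓝[<] 1) (𝓝 0) :=
  ((continuous_const.sub continuous_id).tendsto' 1 0 (sub_self 1)).mono_left nhdsWithin_le_nhds

lemma not_isBigO_one_sub_sq : ¬ (fun r : ℝ => 1 - r) =O[𝓝[<] 1] fun r => (1 - r) ^ 2 := by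
  intro h
  have hsq : (fun r : ℝ => (1 - r) ^ 2) =o[𝓝[<] 1] fun r => 1 - r := by
    simpa [Function.comp_def] using
      (isLittleO_pow_pow (𝕜 := ℝ) one_lt_two).comp_tendsto tendsto_one_sub_nhdsLT_one
  refine isLittleO_irrefl ?_ (h.trans_isLittleO hsq)
  exact (eventually_nhdsWithin_of_forall (s := Iio 1) fun r hr =>
    sub_ne_zero.2 (ne_of_gt hr)).frequently

theorem rigidity_lemma (x : ℂ) (hx : ‖x‖ = 1) (σ : ℂ → ℂ)
    (hσ : SchurFunction σ) (hO : NTBigO (fun z => σ z - x) 2) :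
    ∀ z ∈ unitDisk, σ z = x := by
  have hrad := hO.isBigO_ofReal
  rcases hσ.mapsTo_or_eqOn_const with hmaps | ⟨c, hc⟩
  · have hdist : (fun r : ℝ => 1 - ‖σ r‖) =O[𝓝[<] 1] fun r => σ r - x :=
      isBigO_of_le _ fun r => by
        simpa [hx, norm_sub_rev x] using abs_norm_sub_norm_le x (σ r)
    rw [unitDisk_eq_ball] at hmaps
    exact absurd (((isBigO_one_sub_norm_ofReal (unitDisk_eq_ball ▸ hσ.1) hmaps).trans
      hdist).trans hrad) not_isBigO_one_sub_sq
  · have hconst : (fun _ : ℝ => c - x) =O[𝓝[<] 1] fun r => (1 - r) ^ 2 := by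
      refine hrad.congr' ?_ EventuallyEq.rfl
      filter_upwards [Ioo_mem_nhdsLT zero_lt_one] with r hr
      rw [hc (ofReal_mem_unitDisk hr)]
    have hcx : c - x = 0 := tendsto_const_nhds_iff.mp
      (hconst.trans_tendsto (by simpa using tendsto_one_sub_nhdsLT_one.pow 2))
    intro z hz
    rw [hc hz, ← sub_eq_zero, hcx]
end
end

section
/- Let α ∈ (0,1) and let s be a Schur function admitting the representation s(z) = αz + 1 - α + O((1-z)^4) as z tends nontangentially to 1. Then s(z) = αz + 1 - α for all z ∈ 𝔻 if and only if |1 - s(z)|² < (α/(1-α))·(1 - |s(z)|²) for every z ∈ 𝔻 (i.e., the image s(𝔻) lies inside the horocycle of size α/(1-α) internally tangent to the unit circle at 1). -/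
/-!
The horocycle `‖1 - w‖² < α/(1-α) · (1 - ‖w‖²)` is exactly the disk `‖w - (1 - α)‖ < α`, the
image of `𝔻` under `z ↦ αz + 1 - α`. So the claim is that `h = (s - (1 - α))/α`, a holomorphic
self-map of `𝔻` with `h(r) = r + o((r - 1)³)` radially, is the identity (Burns–Krantz).

For this, `G = (1 + h)/(1 - h)` maps `𝔻` into the right half-plane with `(1 - r) G(r) → 2`.
Julia's lemma, the limit of the half-plane Schwarz–Pick inequality as one point tends to `1`,
gives `Re G ≥ Re ((1 + z)/(1 - z))`, so `v = G - (1 + z)/(1 - z)` has nonnegative real part,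
while `v(r) = o(1 - r)`. Such a `v` vanishes: if `Re v > 0`, Schwarz–Pick between `r` and `0`
gives `(1 + r) |v(r) + conj v(0)|² ≤ 4 Re v(0) Re v(r)/(1 - r) → 0`, forcing `v(0) = 0`;
otherwise `Re v` attains its minimum and `v` is constant by the open mapping theorem.
-/

noncomputable section

open Complex Filter

open Metric Set Topology ComplexConjugate

namespace Complex

lemma normSq_one_sub_conj_mul (a u : ℂ) :
    normSq (1 - conj a * u) = normSq (a - u) + (1 - normSq a) * (1 - normSq u) := by
  simp only [normSq_apply, sub_re, sub_im, one_re, one_im, mul_re, mul_im, conj_re, conj_im]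
  ring

lemma normSq_add_conj (u a : ℂ) :
    normSq (u + conj a) = normSq (u - a) + 4 * u.re * a.re := by
  simp only [normSq_apply, add_re, add_im, sub_re, sub_im, conj_re, conj_im]
  ring

lemma mem_ball_zero_one_iff {u : ℂ} : u ∈ ball (0 : ℂ) 1 ↔ normSq u < 1 := by
  rw [mem_ball_zero_iff, ← sq_lt_one_iff₀ (norm_nonneg u), Complex.sq_norm]

lemma one_sub_ne_zero_of_mem_ball {u : ℂ} (hu : u ∈ ball (0 : ℂ) 1) : 1 - u ≠ 0 := by
  rw [sub_ne_zero]
  rintro rfl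
  simp at hu

def cayley (u : ℂ) : ℂ := (1 + u) / (1 - u)

lemma re_cayley (u : ℂ) : (cayley u).re = (1 - normSq u) / normSq (1 - u) := by
  rw [cayley, div_re, ← add_div]
  congr 1
  simp only [normSq_apply, add_re, add_im, sub_re, sub_im, one_re, one_im]
  ring

lemma re_cayley_pos {u : ℂ} (hu : u ∈ ball (0 : ℂ) 1) : 0 < (cayley u).re := by
  rw [re_cayley]
  exact div_pos (by linarith [mem_ball_zero_one_iff.1 hu])
    (normSq_pos.2 (one_sub_ne_zero_of_mem_ball hu))

lemma differentiableOn_cayley : DifferentiableOn ℂ cayley (ball 0 1) :=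
  ((differentiableOn_const 1).add differentiableOn_id).div
    ((differentiableOn_const 1).sub differentiableOn_id) fun _ => one_sub_ne_zero_of_mem_ball

lemma cayley_injOn : InjOn cayley (ball 0 1) := by
  intro a ha b hb hab
  rw [cayley, cayley, div_eq_div_iff (one_sub_ne_zero_of_mem_ball ha)
    (one_sub_ne_zero_of_mem_ball hb)] at hab
  linear_combination hab / 2

def diskMobius (a u : ℂ) : ℂ := (a - u) / (1 - conj a * u)

section diskMobius

variable {a u : ℂ}

lemma one_sub_conj_mul_ne_zero (ha : a ∈ ball (0 : ℂ) 1) (hu : u ∈ ball (0 : ℂ) 1) :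
    1 - conj a * u ≠ 0 := by
  rw [mem_ball_zero_one_iff] at ha hu
  rw [← normSq_pos, normSq_one_sub_conj_mul]
  nlinarith [normSq_nonneg (a - u)]

lemma diskMobius_mem_ball (ha : a ∈ ball (0 : ℂ) 1) (hu : u ∈ ball (0 : ℂ) 1) :
    diskMobius a u ∈ ball (0 : ℂ) 1 := by
  have hpos := normSq_pos.2 (one_sub_conj_mul_ne_zero ha hu)
  rw [mem_ball_zero_one_iff] at ha hu ⊢
  rw [diskMobius, normSq_div, div_lt_one hpos, normSq_one_sub_conj_mul]
  nlinarith

lemma diskMobius_zero (a : ℂ) : diskMobius a 0 = a := by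
  simp [diskMobius]

lemma diskMobius_diskMobius (ha : a ∈ ball (0 : ℂ) 1) (hu : u ∈ ball (0 : ℂ) 1) :
    diskMobius a (diskMobius a u) = u := by
  have hd := one_sub_conj_mul_ne_zero ha hu
  have haa := one_sub_conj_mul_ne_zero ha ha
  have hnum : a - diskMobius a u = u * (1 - conj a * a) / (1 - conj a * u) := by
    rw [diskMobius, eq_div_iff hd, sub_mul, div_mul_cancel₀ _ hd]; ring
  have hden : 1 - conj a * diskMobius a u = (1 - conj a * a) / (1 - conj a * u) := by
    rw [diskMobius, eq_div_iff hd, sub_mul, one_mul, mul_div_assoc', div_mul_cancel₀ _ hd]; ring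
  rw [diskMobius, hnum, hden, div_div_div_cancel_right₀ hd, mul_div_cancel_right₀ _ haa]

lemma differentiableOn_diskMobius (ha : a ∈ ball (0 : ℂ) 1) :
    DifferentiableOn ℂ (diskMobius a) (ball 0 1) :=
  ((differentiableOn_const a).sub differentiableOn_id).div
    ((differentiableOn_const 1).sub ((differentiableOn_const _).mul differentiableOn_id))
    fun _ hu => one_sub_conj_mul_ne_zero ha hu

end diskMobius

section rightHalfPlane

variable {x a : ℂ}

lemma add_conj_ne_zero (hx : 0 < x.re) (ha : 0 < a.re) : x + conj a ≠ 0 := by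
  intro h
  have := congrArg re h
  simp only [add_re, conj_re, zero_re] at this
  linarith

lemma div_add_conj_mem_ball (hx : 0 < x.re) (ha : 0 < a.re) :
    (x - a) / (x + conj a) ∈ ball (0 : ℂ) 1 := by
  rw [mem_ball_zero_one_iff, normSq_div, div_lt_one (normSq_pos.2 (add_conj_ne_zero hx ha)),
    normSq_add_conj]
  nlinarith

end rightHalfPlane

/-- The Schwarz–Pick lemma for holomorphic maps of the disk into the right half-plane. -/
theorem schwarzPick_of_re_pos {G : ℂ → ℂ} (hG : DifferentiableOn ℂ G (ball 0 1))
    (hre : ∀ z ∈ ball (0 : ℂ) 1, 0 < (G z).re) {z w : ℂ}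
    (hz : z ∈ ball (0 : ℂ) 1) (hw : w ∈ ball (0 : ℂ) 1) :
    (1 - normSq z) * (1 - normSq w) * normSq (G z + conj (G w)) ≤
      4 * (G z).re * (G w).re * normSq (1 - conj w * z) := by
  have hmob : MapsTo (diskMobius w) (ball 0 1) (ball 0 1) := fun u hu => diskMobius_mem_ball hw hu
  set g : ℂ → ℂ := fun u => (G (diskMobius w u) - G w) / (G (diskMobius w u) + conj (G w))
  have hg_maps : MapsTo g (ball 0 1) (ball 0 1) := fun u hu =>
    div_add_conj_mem_ball (hre _ (hmob hu)) (hre w hw)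
  have hg_diff : DifferentiableOn ℂ g (ball 0 1) := by
    have hGm := hG.comp (differentiableOn_diskMobius hw) hmob
    exact (hGm.sub_const _).div (hGm.add_const _) fun u hu =>
      add_conj_ne_zero (hre _ (hmob hu)) (hre w hw)
  have hg_zero : g 0 = 0 := by simp [g, diskMobius_zero]
  have hschwarz := norm_le_norm_of_mapsTo_ball hg_diff
    (hg_maps.mono_right ball_subset_closedBall) hg_zero (mem_ball_zero_iff.1 (hmob hz))
  simp only [g, diskMobius_diskMobius hw hz] at hschwarz
  have hsq := pow_le_pow_left₀ (norm_nonneg _) hschwarz 2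
  rw [Complex.sq_norm, Complex.sq_norm, diskMobius, normSq_div, normSq_div, div_le_div_iff₀
    (normSq_pos.2 (add_conj_ne_zero (hre z hz) (hre w hw)))
    (normSq_pos.2 (one_sub_conj_mul_ne_zero hw hz)), normSq_add_conj,
    normSq_one_sub_conj_mul, ← normSq_neg (w - z), neg_sub] at hsq
  rw [normSq_add_conj, normSq_one_sub_conj_mul, ← normSq_neg (w - z), neg_sub]
  linear_combination hsq

end Complex

lemma tendsto_ofReal_nhdsLT_one : Tendsto (fun r : ℝ => (r : ℂ)) (𝓝[<] 1) (𝓝 1) := by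
  simpa using (continuous_ofReal.tendsto 1).mono_left nhdsWithin_le_nhds

lemma tendsto_one_sub_ofReal_nhdsLT_one :
    Tendsto (fun r : ℝ => (1 - r : ℂ)) (𝓝[<] 1) (𝓝 0) := by
  simpa using tendsto_ofReal_nhdsLT_one.const_sub (1 : ℂ)

lemma ofReal_mem_ball_of_mem_Ioo {r : ℝ} (hr : r ∈ Ioo (0 : ℝ) 1) : (r : ℂ) ∈ ball (0 : ℂ) 1 := by
  rw [mem_ball_zero_iff, norm_real, Real.norm_of_nonneg hr.1.le]
  exact hr.2

/-- Julia's lemma for holomorphic maps of the disk into the right half-plane. -/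
theorem julia_of_re_pos {G : ℂ → ℂ} (hG : DifferentiableOn ℂ G (ball 0 1))
    (hre : ∀ z ∈ ball (0 : ℂ) 1, 0 < (G z).re) {β : ℝ} (hβ : 0 < β)
    (hlim : Tendsto (fun r : ℝ => (1 - r : ℂ) * G r) (𝓝[<] 1) (𝓝 (2 * β)))
    {z : ℂ} (hz : z ∈ ball (0 : ℂ) 1) :
    β * (cayley z).re ≤ (G z).re := by
  set L : ℝ → ℂ := fun r => (1 - r : ℂ) * G r
  have hev : ∀ᶠ r : ℝ in 𝓝[<] 1,
      (1 - normSq z) * (1 + r) * normSq ((1 - r : ℂ) * G z + conj (L r)) ≤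
        4 * (G z).re * (L r).re * normSq (1 - r * z) := by
    filter_upwards [Ioo_mem_nhdsLT one_pos] with r hr
    have hpick := schwarzPick_of_re_pos hG hre hz (ofReal_mem_ball_of_mem_Ioo hr)
    have hL : (1 - r : ℂ) * G z + conj (L r) = ((1 - r : ℝ) : ℂ) * (G z + conj (G r)) := by
      simp only [L, map_mul, map_sub, map_one, conj_ofReal]; push_cast; ring
    have hLre : (L r).re = (1 - r) * (G r).re := by
      simp only [L, ← ofReal_one, ← ofReal_sub, re_ofReal_mul]
    rw [conj_ofReal, normSq_ofReal] at hpick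
    rw [hL, hLre, normSq_mul, normSq_ofReal]
    have h1r : 0 ≤ 1 - r := by linarith [hr.2]
    nlinarith [mul_le_mul_of_nonneg_left hpick h1r]
  have hpair : Tendsto (fun r : ℝ => ((r : ℂ), L r)) (𝓝[<] 1) (𝓝 (1, 2 * β)) :=
    tendsto_ofReal_nhdsLT_one.prodMk_nhds hlim
  have hleft := ((by fun_prop : Continuous fun p : ℂ × ℂ =>
    (1 - normSq z) * (1 + p.1.re) * normSq ((1 - p.1) * G z + conj p.2)).tendsto _).comp hpair
  have hright := ((by fun_prop : Continuous fun p : ℂ × ℂ =>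
    4 * (G z).re * p.2.re * normSq (1 - p.1 * z)).tendsto _).comp hpair
  have hineq := le_of_tendsto_of_tendsto hleft hright hev
  simp only [one_re, sub_self, zero_mul, zero_add, one_mul] at hineq
  have h2β : (2 * β : ℂ) = ((2 * β : ℝ) : ℂ) := by push_cast; ring
  rw [h2β, conj_ofReal, normSq_ofReal, ofReal_re] at hineq
  have hpos := normSq_pos.2 (one_sub_ne_zero_of_mem_ball hz)
  rw [re_cayley, mul_div_assoc', div_le_iff₀ hpos]
  nlinarith

theorem eqOn_of_isPreconnected_of_isMinOn_re {v : ℂ → ℂ} {U : Set ℂ} {c : ℂ}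
    (hc : IsPreconnected U) (ho : IsOpen U) (hd : DifferentiableOn ℂ v U) (hcU : c ∈ U)
    (hm : IsMinOn (fun z => (v z).re) U c) : EqOn v (Function.const ℂ (v c)) U := by
  have han := hd.analyticOnNhd ho
  rcases (han c hcU).eventually_constant_or_nhds_le_map_nhds with hconst | hopen
  · exact han.eqOn_of_preconnected_of_eventuallyEq analyticOnNhd_const hc hcU hconst
  · obtain ⟨ε, hε, hball⟩ := Metric.mem_nhds_iff.1 (hopen (image_mem_map (ho.mem_nhds hcU)))
    have hmem : v c - (ε / 2 : ℝ) ∈ ball (v c) ε := by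
      rw [mem_ball, dist_eq, sub_sub_cancel_left, norm_neg, norm_real,
        Real.norm_of_nonneg (by positivity)]
      linarith
    obtain ⟨z, hz, hvz⟩ := hball hmem
    have hmin : (v c).re ≤ (v z).re := hm hz
    rw [hvz, sub_re, ofReal_re] at hmin
    linarith

theorem eqOn_zero_of_re_nonneg_of_tendsto {v : ℂ → ℂ} (hv : DifferentiableOn ℂ v (ball 0 1))
    (hre : ∀ z ∈ ball (0 : ℂ) 1, 0 ≤ (v z).re)
    (hlim : Tendsto (fun r : ℝ => v r / (1 - r)) (𝓝[<] 1) (𝓝 0)) :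
    EqOn v 0 (ball 0 1) := by
  have hv_one : Tendsto (fun r : ℝ => v r) (𝓝[<] 1) (𝓝 0) := by
    have hprod := hlim.mul tendsto_one_sub_ofReal_nhdsLT_one
    rw [zero_mul] at hprod
    refine hprod.congr' ?_
    filter_upwards [Ioo_mem_nhdsLT one_pos] with r hr
    exact div_mul_cancel₀ _ (one_sub_ne_zero_of_mem_ball (ofReal_mem_ball_of_mem_Ioo hr))
  by_cases hpos : ∀ z ∈ ball (0 : ℂ) 1, 0 < (v z).re
  · exfalso
    have h0 : (0 : ℂ) ∈ ball (0 : ℂ) 1 := mem_ball_self one_pos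
    have hev : ∀ᶠ r : ℝ in 𝓝[<] 1,
        (1 + r) * normSq (v r + conj (v 0)) ≤ 4 * (v r / (1 - r)).re * (v 0).re := by
      filter_upwards [Ioo_mem_nhdsLT one_pos] with r hr
      have hpick := schwarzPick_of_re_pos hv hpos (ofReal_mem_ball_of_mem_Ioo hr) h0
      simp only [normSq_ofReal, map_zero, zero_mul, sub_zero, normSq_one, mul_one] at hpick
      rw [← ofReal_one, ← ofReal_sub, div_ofReal_re, mul_div_assoc', div_mul_eq_mul_div,
        le_div_iff₀ (by linarith [hr.2])]
      nlinarith
    have hleft := ((by fun_prop : Continuous fun p : ℂ × ℂ =>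
      (1 + p.1.re) * normSq (p.2 + conj (v 0))).tendsto _).comp
      (tendsto_ofReal_nhdsLT_one.prodMk_nhds hv_one)
    have hright := ((by fun_prop : Continuous fun q : ℂ => 4 * q.re * (v 0).re).tendsto _).comp hlim
    have hineq := le_of_tendsto_of_tendsto hleft hright hev
    simp only [one_re, zero_add, zero_re, mul_zero, zero_mul, normSq_conj] at hineq
    have := hpos 0 h0
    rw [show v 0 = 0 from normSq_eq_zero.1 (by linarith [normSq_nonneg (v 0)]), zero_re] at this
    exact lt_irrefl 0 this
  · simp only [not_forall, not_lt] at hpos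
    obtain ⟨c, hc, hc_re⟩ := hpos
    have hconst := eqOn_of_isPreconnected_of_isMinOn_re (convex_ball 0 1).isPreconnected
      isOpen_ball hv hc fun z hz => hc_re.trans (hre z hz)
    have hc_zero : v c = 0 := by
      refine tendsto_nhds_unique (tendsto_const_nhds.congr' ?_) hv_one
      filter_upwards [Ioo_mem_nhdsLT one_pos] with r hr
      exact (hconst (ofReal_mem_ball_of_mem_Ioo hr)).symm
    intro z hz
    rw [hconst hz, Function.const_apply, hc_zero, Pi.zero_apply]

lemma isLittleO_ofReal_sub_one_pow {m n : ℕ} (hmn : m < n) :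
    (fun r : ℝ => ((r : ℂ) - 1) ^ n) =o[𝓝[<] 1] fun r : ℝ => ((r : ℂ) - 1) ^ m := by
  have hsub : Tendsto (fun r : ℝ => (r : ℂ) - 1) (𝓝[<] 1) (𝓝 0) := by
    simpa using tendsto_ofReal_nhdsLT_one.sub_const (1 : ℂ)
  exact (Asymptotics.isLittleO_pow_pow hmn).comp_tendsto hsub

section radialExpansion

variable {h : ℂ → ℂ}

lemma tendsto_one_sub_div_one_sub_of_isLittleO
    (ho : (fun r : ℝ => h r - r) =o[𝓝[<] 1] fun r : ℝ => (r : ℂ) - 1) :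
    Tendsto (fun r : ℝ => (1 - h r) / (1 - r)) (𝓝[<] 1) (𝓝 1) := by
  have hlim := (tendsto_const_nhds (x := (1 : ℂ))).add ho.tendsto_div_nhds_zero
  rw [add_zero] at hlim
  refine hlim.congr' ?_
  filter_upwards [Ioo_mem_nhdsLT one_pos] with r hr
  have hr1 := one_sub_ne_zero_of_mem_ball (ofReal_mem_ball_of_mem_Ioo hr)
  rw [← neg_div_neg_eq (h r - r), neg_sub, neg_sub, add_div' _ _ _ hr1]
  ring

lemma tendsto_one_sub_mul_cayley_of_isLittleO
    (ho : (fun r : ℝ => h r - r) =o[𝓝[<] 1] fun r : ℝ => (r : ℂ) - 1) :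
    Tendsto (fun r : ℝ => (1 - r : ℂ) * cayley (h r)) (𝓝[<] 1) (𝓝 2) := by
  have hA := tendsto_one_sub_div_one_sub_of_isLittleO ho
  have hh : Tendsto (fun r : ℝ => h r) (𝓝[<] 1) (𝓝 1) := by
    have hlim := (tendsto_const_nhds (x := (1 : ℂ))).sub (tendsto_one_sub_ofReal_nhdsLT_one.mul hA)
    rw [zero_mul, sub_zero] at hlim
    refine hlim.congr' ?_
    filter_upwards [Ioo_mem_nhdsLT one_pos] with r hr
    have hr1 := one_sub_ne_zero_of_mem_ball (ofReal_mem_ball_of_mem_Ioo hr)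
    rw [mul_div_cancel₀ _ hr1, sub_sub_cancel]
  have hlim := ((tendsto_const_nhds (x := (1 : ℂ))).add hh).div hA one_ne_zero
  rw [show ((1 : ℂ) + 1) / 1 = 2 by norm_num] at hlim
  refine hlim.congr fun r => ?_
  simp only [Pi.div_apply, cayley]
  rw [div_div_eq_mul_div]
  ring

lemma tendsto_cayley_sub_cayley_div_of_isLittleO
    (ho : (fun r : ℝ => h r - r) =o[𝓝[<] 1] fun r : ℝ => ((r : ℂ) - 1) ^ 3) :
    Tendsto (fun r : ℝ => (cayley (h r) - cayley r) / (1 - r)) (𝓝[<] 1) (𝓝 0) := by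
  have hA := tendsto_one_sub_div_one_sub_of_isLittleO
    (by simpa using ho.trans (isLittleO_ofReal_sub_one_pow (by norm_num : 1 < 3)))
  have hlim := (ho.tendsto_div_nhds_zero.const_mul (-2)).div hA one_ne_zero
  rw [mul_zero, zero_div] at hlim
  refine hlim.congr' ?_
  filter_upwards [Ioo_mem_nhdsLT one_pos, hA.eventually_ne one_ne_zero] with r hr hA_ne
  have hr1 := one_sub_ne_zero_of_mem_ball (ofReal_mem_ball_of_mem_Ioo hr)
  have hr1' : (r : ℂ) - 1 ≠ 0 := by rw [← neg_ne_zero, neg_sub]; exact hr1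
  have hh1 : 1 - h r ≠ 0 := (div_ne_zero_iff.1 hA_ne).1
  simp only [Pi.div_apply, cayley]
  field_simp
  ring

end radialExpansion

/-- The Burns–Krantz rigidity theorem, with a radial `o((z - 1) ^ 3)` remainder. -/
theorem eqOn_id_of_isLittleO {h : ℂ → ℂ} (hd : DifferentiableOn ℂ h (ball 0 1))
    (hmaps : MapsTo h (ball 0 1) (ball 0 1))
    (ho : (fun r : ℝ => h r - r) =o[𝓝[<] 1] fun r : ℝ => ((r : ℂ) - 1) ^ 3) :
    EqOn h id (ball 0 1) := by
  have hG_diff : DifferentiableOn ℂ (fun z => cayley (h z)) (ball 0 1) :=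
    differentiableOn_cayley.comp hd hmaps
  have hG_lim : Tendsto (fun r : ℝ => (1 - r : ℂ) * cayley (h r)) (𝓝[<] 1) (𝓝 (2 * (1 : ℝ))) := by
    simpa using tendsto_one_sub_mul_cayley_of_isLittleO
      (by simpa using ho.trans (isLittleO_ofReal_sub_one_pow (by norm_num : 1 < 3)))
  have hv_re : ∀ z ∈ ball (0 : ℂ) 1, 0 ≤ (cayley (h z) - cayley z).re := fun z hz => by
    have := julia_of_re_pos hG_diff (fun z hz => re_cayley_pos (hmaps hz)) one_pos hG_lim hz
    rw [sub_re]
    linarith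
  have hv_zero := eqOn_zero_of_re_nonneg_of_tendsto (hG_diff.sub differentiableOn_cayley) hv_re
    (tendsto_cayley_sub_cayley_div_of_isLittleO ho)
  exact fun z hz => cayley_injOn (hmaps hz) hz (sub_eq_zero.1 (hv_zero hz))

lemma tendsto_ofReal_nhdsLT_one_stolzRegion {K : ℝ} (hK : 1 < K) :
    Tendsto (fun r : ℝ => (r : ℂ)) (𝓝[<] 1) (𝓝[stolzRegion K] 1) := by
  refine tendsto_nhdsWithin_iff.2 ⟨tendsto_ofReal_nhdsLT_one, ?_⟩
  filter_upwards [Ioo_mem_nhdsLT one_pos] with r hr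
  have hnorm : ‖(r : ℂ)‖ = r := by rw [norm_real, Real.norm_of_nonneg hr.1.le]
  have hsub : ‖(r : ℂ) - 1‖ = 1 - r := by
    rw [← ofReal_one, ← ofReal_sub, norm_real, Real.norm_of_nonpos (by linarith [hr.2]), neg_sub]
  refine ⟨by rw [hnorm]; exact hr.2, ?_⟩
  rw [hsub, hnorm]
  nlinarith [hr.2]

lemma NTBigO.isLittleO_ofReal {f : ℂ → ℂ} {m : ℕ} (hf : NTBigO f (m + 1)) :
    (fun r : ℝ => f r) =o[𝓝[<] 1] fun r : ℝ => ((r : ℂ) - 1) ^ m :=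
  ((hf 2 one_lt_two).comp_tendsto
    (tendsto_ofReal_nhdsLT_one_stolzRegion one_lt_two)).trans_isLittleO
    (isLittleO_ofReal_sub_one_pow (lt_add_one m))

lemma sq_norm_one_sub_lt_iff {α : ℝ} (hα₀ : 0 < α) (hα₁ : α < 1) (w : ℂ) :
    ‖1 - w‖ ^ 2 < α / (1 - α) * (1 - ‖w‖ ^ 2) ↔ ‖w - (1 - α)‖ < α := by
  rw [← sq_lt_sq₀ (norm_nonneg _) hα₀.le, div_mul_eq_mul_div, lt_div_iff₀ (by linarith)]
  simp only [Complex.sq_norm, normSq_apply, sub_re, sub_im, one_re, one_im, ofReal_re, ofReal_im]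
  constructor <;> intro h <;> nlinarith

theorem rigidity_horocycle (α : ℝ) (hα : α ∈ Set.Ioo (0 : ℝ) 1)
    (s : ℂ → ℂ) (hs : SchurFunction s)
    (hO : NTBigO (fun z => s z - (α * z + 1 - α)) 4) :
    (∀ z ∈ unitDisk, s z = α * z + 1 - α) ↔
      (∀ z ∈ unitDisk,
        ‖1 - s z‖ ^ 2 < (α / (1 - α)) * (1 - ‖s z‖ ^ 2)) := by
  obtain ⟨hα₀, hα₁⟩ := hα
  have hdisk : unitDisk = ball (0 : ℂ) 1 := by ext; simp [unitDisk]
  have hα_ne : (α : ℂ) ≠ 0 := ofReal_ne_zero.2 hα₀.ne'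
  have hs_diff : DifferentiableOn ℂ s (ball 0 1) := hdisk ▸ hs.1
  simp only [hdisk, sq_norm_one_sub_lt_iff hα₀ hα₁]
  constructor
  · intro hs_eq z hz
    rw [hs_eq z hz, add_sub_assoc, add_sub_cancel_right, norm_mul, norm_real,
      Real.norm_of_nonneg hα₀.le]
    exact mul_lt_of_lt_one_right hα₀ (mem_ball_zero_iff.1 hz)
  · intro hs_mem
    set h : ℂ → ℂ := fun z => (s z - (1 - α)) / α
    have hh_maps : MapsTo h (ball 0 1) (ball 0 1) := fun z hz => by
      rw [mem_ball_zero_iff, norm_div, norm_real, Real.norm_of_nonneg hα₀.le, div_lt_one hα₀]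
      exact hs_mem z hz
    have hh_o : (fun r : ℝ => h r - r) =o[𝓝[<] 1] fun r : ℝ => ((r : ℂ) - 1) ^ 3 := by
      refine ((hO.isLittleO_ofReal (m := 3)).const_mul_left (α : ℂ)⁻¹).congr_left fun r => ?_
      simp only [h]
      field_simp
      ring
    intro z hz
    have hid := eqOn_id_of_isLittleO ((hs_diff.sub_const _).div_const _) hh_maps hh_o hz
    rw [id, div_eq_iff hα_ne] at hid
    linear_combination hid
end
end

section
/- The function s(z) = (1+z)/2 + (z-1)^4/20 is a Schur function, i.e., it satisfies |s(z)| ≤ 1 for all z in the open unit disk; consequently, a Schur function may satisfy s(z) = αz + 1 - α + O((z-1)^4) at z = 1 with α = 1/2 without being equal to αz + 1 - α. -/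
noncomputable section

open Complex Filter

/-- The example `s(z) = (1+z)/2 + (z-1)⁴/20`. -/
def exampleSchur : ℂ → ℂ := fun z => (1 + z) / 2 + (z - 1) ^ 4 / 20

/-!
On the disk, `|s(z)| ≤ |1 + z|/2 + |z - 1|⁴/20`, and by the parallelogram law
`|1 + z|² + |z - 1|² = 2 + 2|z|² < 4`. So it suffices that `a/2 + b⁴/20 ≤ 1` whenever
`a, b ≥ 0` and `a² + b² ≤ 4`, which reduces to a one-variable polynomial inequality on `[0, 2]`.
-/

-- `20 - 10a - (4 - a²)² = (2 - a)(a³ + 2a² - 4a + 2)` and `a³ + 2a² - 4a + 2 = (a - 2/3)²(a + 10/3) + 14/27`.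
lemma ten_mul_add_four_sub_sq_sq_le {a : ℝ} (ha : 0 ≤ a) (ha2 : a ≤ 2) :
    10 * a + (4 - a ^ 2) ^ 2 ≤ 20 := by
  nlinarith [mul_nonneg (mul_nonneg (sub_nonneg.2 ha2) (sq_nonneg (a - 2 / 3)))
    (by linarith : (0 : ℝ) ≤ a + 10 / 3)]

lemma half_add_pow_four_div_twenty_le_one {a b : ℝ} (ha : 0 ≤ a)
    (hab : a ^ 2 + b ^ 2 ≤ 4) : a / 2 + b ^ 4 / 20 ≤ 1 := by
  have ha2 : a ≤ 2 := by nlinarith [sq_nonneg b]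
  have hb4 : b ^ 4 ≤ (4 - a ^ 2) ^ 2 := by
    rw [show b ^ 4 = (b ^ 2) ^ 2 by ring]
    exact pow_le_pow_left₀ (sq_nonneg b) (by linarith) 2
  linarith [ten_mul_add_four_sub_sq_sq_le ha ha2]

lemma norm_one_add_sq_add_norm_sub_one_sq (z : ℂ) :
    ‖1 + z‖ ^ 2 + ‖z - 1‖ ^ 2 = 2 + 2 * ‖z‖ ^ 2 := by
  rw [add_comm 1 z, parallelogram_law_with_norm ℝ z 1, norm_one]
  ring

lemma norm_exampleSchur_le_one {z : ℂ} (hz : z ∈ unitDisk) : ‖exampleSchur z‖ ≤ 1 := by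
  have hz : ‖z‖ < 1 := hz
  have hsum : ‖1 + z‖ ^ 2 + ‖z - 1‖ ^ 2 ≤ 4 := by
    nlinarith [norm_one_add_sq_add_norm_sub_one_sq z, norm_nonneg z]
  calc ‖exampleSchur z‖ ≤ ‖1 + z‖ / 2 + ‖z - 1‖ ^ 4 / 20 := by
        refine (norm_add_le _ _).trans_eq ?_
        simp [norm_pow]
    _ ≤ 1 := half_add_pow_four_div_twenty_le_one (norm_nonneg _) hsum

lemma schurFunction_exampleSchur : SchurFunction exampleSchur :=
  ⟨by unfold exampleSchur; fun_prop, fun _ hz => norm_exampleSchur_le_one hz⟩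

lemma exampleSchur_sub_affine (z : ℂ) :
    exampleSchur z - ((1 / 2 : ℝ) * z + 1 - (1 / 2 : ℝ)) = (1 / 20 : ℂ) * (z - 1) ^ 4 := by
  simp only [exampleSchur]
  push_cast
  ring

lemma ntBigO_const_mul_sub_one_pow (c : ℂ) (m : ℕ) : NTBigO (fun z => c * (z - 1) ^ m) m :=
  fun _ _ => Asymptotics.isBigO_const_mul_self c _ _

/-- `s(z) = (1+z)/2 + (z-1)⁴/20` is a Schur function; consequently a Schur function may
satisfy `s(z) = αz + 1 - α + O((z-1)⁴)` at `z = 1` with `α = 1/2` without being equal to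
`αz + 1 - α`. -/
theorem example_no_rigidity :
    SchurFunction exampleSchur ∧
    NTBigO (fun z => exampleSchur z - ((1 / 2 : ℝ) * z + 1 - (1 / 2 : ℝ))) 4 ∧
    ¬(∀ z ∈ unitDisk, exampleSchur z = (1 / 2 : ℝ) * z + 1 - (1 / 2 : ℝ)) := by
  refine ⟨schurFunction_exampleSchur, ?_, fun h => ?_⟩
  · simpa only [exampleSchur_sub_affine] using ntBigO_const_mul_sub_one_pow (1 / 20) 4
  · have h0 := h 0 (by simp [unitDisk])
    norm_num [exampleSchur] at h0
end
end

section
/- For each α ∈ (0,1) there exists a sufficiently small β > 0 such that the function s(z) = αz + 1 - α + β(1-z)^4 is a Schur function, i.e., |s(z)| ≤ 1 for all z in the open unit disk. -/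
noncomputable section

open Complex Filter

/-!
Put `t = 1 - Re z ∈ [0, 2]`. On the closed unit disk `‖1 - z‖² ≤ 2t`, and the convex combination
`(1 - α) + α z` satisfies the sharpened bound `‖(1 - α) + α z‖ ≤ 1 - α(1 - α) t`: it gains a
margin linear in `t`. The perturbation is of size `β ‖1 - z‖⁴ ≤ 4βt² ≤ 8βt`, so it fits into
this margin as soon as `β ≤ α(1 - α)/8`.
-/

namespace Complex

theorem norm_one_sub_sq_le_of_norm_le_one {z : ℂ} (hz : ‖z‖ ≤ 1) :
    ‖1 - z‖ ^ 2 ≤ 2 * (1 - z.re) := by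
  have hz2 : z.re * z.re + z.im * z.im ≤ 1 := by
    rw [← normSq_apply, ← Complex.sq_norm]
    exact pow_le_one₀ (norm_nonneg z) hz
  rw [Complex.sq_norm, normSq_apply]
  simp only [sub_re, one_re, sub_im, one_im]
  nlinarith

theorem norm_one_sub_pow_four_le_of_norm_le_one {z : ℂ} (hz : ‖z‖ ≤ 1) :
    ‖(1 - z) ^ 4‖ ≤ 8 * (1 - z.re) := by
  have hsq := norm_one_sub_sq_le_of_norm_le_one hz
  have hre : z.re ≤ 1 := (re_le_norm z).trans hz
  have hre' : -1 ≤ z.re := by linarith [neg_abs_le z.re, abs_re_le_norm z]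
  calc ‖(1 - z) ^ 4‖ = (‖1 - z‖ ^ 2) ^ 2 := by rw [norm_pow]; ring
    _ ≤ (2 * (1 - z.re)) ^ 2 := by gcongr
    _ ≤ 8 * (1 - z.re) := by nlinarith

theorem norm_one_sub_add_mul_le (a : ℝ) {z : ℂ} (hz : ‖z‖ ≤ 1) :
    ‖(1 - a : ℂ) + a * z‖ ≤ 1 - a * (1 - a) * (1 - z.re) := by
  have hz2 : z.re * z.re + z.im * z.im ≤ 1 := by
    rw [← normSq_apply, ← Complex.sq_norm]
    exact pow_le_one₀ (norm_nonneg z) hz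
  have hre : z.re ≤ 1 := (re_le_norm z).trans hz
  have hre' : -1 ≤ z.re := by linarith [neg_abs_le z.re, abs_re_le_norm z]
  have hmargin : 0 ≤ 1 - a * (1 - a) * (1 - z.re) := by
    nlinarith [sq_nonneg (a - 1 / 2)]
  have hsq : ‖(1 - a : ℂ) + a * z‖ ^ 2
      = (1 - a) ^ 2 + 2 * a * (1 - a) * z.re + a ^ 2 * (z.re * z.re + z.im * z.im) := by
    rw [Complex.sq_norm, normSq_apply]
    simp only [add_re, add_im, sub_re, sub_im, one_re, one_im, ofReal_re, ofReal_im, mul_re,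
      mul_im]
    ring
  refine (sq_le_sq₀ (norm_nonneg _) hmargin).1 ?_
  rw [hsq]
  nlinarith [sq_nonneg (a * (1 - a) * (1 - z.re)), mul_le_mul_of_nonneg_left hz2 (sq_nonneg a)]

end Complex

theorem schurFunction_affine_add_mul_one_sub_pow_four {α β : ℝ} (hβ₀ : 0 ≤ β)
    (hβ : β ≤ α * (1 - α) / 8) :
    SchurFunction (fun z => α * z + 1 - α + β * (1 - z) ^ 4) := by
  refine ⟨Differentiable.differentiableOn (by fun_prop), fun z hz => ?_⟩
  have hz : ‖z‖ ≤ 1 := le_of_lt hz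
  have ht : 0 ≤ 1 - z.re := sub_nonneg.2 ((re_le_norm z).trans hz)
  calc ‖α * z + 1 - α + β * (1 - z) ^ 4‖ = ‖((1 - α : ℂ) + α * z) + β * (1 - z) ^ 4‖ := by
        ring_nf
    _ ≤ ‖(1 - α : ℂ) + α * z‖ + ‖(β : ℂ) * (1 - z) ^ 4‖ := norm_add_le _ _
    _ = ‖(1 - α : ℂ) + α * z‖ + β * ‖(1 - z) ^ 4‖ := by
        rw [norm_mul, norm_real, Real.norm_of_nonneg hβ₀]
    _ ≤ (1 - α * (1 - α) * (1 - z.re)) + β * (8 * (1 - z.re)) := by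
        gcongr
        · exact norm_one_sub_add_mul_le α hz
        · exact norm_one_sub_pow_four_le_of_norm_le_one hz
    _ ≤ 1 := by nlinarith

theorem exists_schur_perturbation (α : ℝ) (hα : α ∈ Set.Ioo (0 : ℝ) 1) :
    ∃ β : ℝ, 0 < β ∧
      SchurFunction (fun z => α * z + 1 - α + β * (1 - z) ^ 4) := by
  obtain ⟨hα₀, hα₁⟩ := hα
  have hβ : 0 < α * (1 - α) / 8 := by have := mul_pos hα₀ (sub_pos.2 hα₁); positivity
  exact ⟨_, hβ, schurFunction_affine_add_mul_one_sub_pow_four hβ.le le_rfl⟩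
end
end
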